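/- arXiv:1512.07649 — 3 statements merged into one kernel-verified Lean document; each statement's English description precedes it below -/
import Mathlib

section
/- Let f : [T₀, T₁] → ℝ be nonnegative and bounded, and suppose there are constants A, B ≥ 0, θ ∈ [0,1), l > 0 such that f(t) ≤ A(s−t)^{−l} + B + θ f(s) for all T₀ ≤ t < s ≤ T₁. Then there exists a constant γ > 1 depending only on l and θ such that for all T₀ ≤ ρ < R ≤ T₁, f(ρ) ≤ γ (A(R−ρ)^{−l} + B). -/
open Set

private lemma geom_sum_le_aux {r : ℝ} (h0 : 0 ≤ r) (h1 : r < 1) (n : ℕ) :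
    ∑ i ∈ Finset.range n, r ^ i ≤ (1 - r)⁻¹ := by
  have hr : 0 < 1 - r := by linarith
  rw [geom_sum_eq h1.ne]
  have hrn : 0 ≤ r ^ n := pow_nonneg h0 n
  have heq : (r ^ n - 1) / (r - 1) = (1 - r ^ n) / (1 - r) := by
    rw [← neg_div_neg_eq]; ring_nf
  rw [heq, ← one_div]
  gcongr
  linarith

/-- Iteration lemma (Giaquinta–Giusti): if a nonnegative bounded `f` on `[T₀,T₁]` satisfies
`f t ≤ A (s−t)^{−l} + B + θ f s` for `T₀ ≤ t < s ≤ T₁` with `θ < 1`, then there is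
`γ > 1`, depending only on `l` and `θ`, with `f ρ ≤ γ (A (R−ρ)^{−l} + B)` for all
`T₀ ≤ ρ < R ≤ T₁`. -/
theorem iteration_lemma (l θ : ℝ) (hl : 0 < l) (hθ0 : 0 ≤ θ) (hθ1 : θ < 1) :
    ∃ γ : ℝ, 1 < γ ∧
      ∀ (f : ℝ → ℝ) (A B T₀ T₁ : ℝ), 0 ≤ A → 0 ≤ B → T₀ ≤ T₁ →
        (∀ t ∈ Icc T₀ T₁, 0 ≤ f t) →
        (∃ M : ℝ, ∀ t ∈ Icc T₀ T₁, f t ≤ M) →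
        (∀ t s, T₀ ≤ t → t < s → s ≤ T₁ →
          f t ≤ A * (s - t) ^ (-l) + B + θ * f s) →
        ∀ ρ R, T₀ ≤ ρ → ρ < R → R ≤ T₁ →
          f ρ ≤ γ * (A * (R - ρ) ^ (-l) + B) := by
  -- choose τ with τ^l = (1+θ)/2
  set τ : ℝ := ((1 + θ) / 2) ^ (1 / l) with hτdef
  have hbase0 : (0:ℝ) < (1 + θ) / 2 := by linarith
  have hbase1 : (1 + θ) / 2 < 1 := by linarith
  have hτpos : 0 < τ := Real.rpow_pos_of_pos hbase0 _
  have hτ1 : τ < 1 := by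
    apply Real.rpow_lt_one hbase0.le hbase1
    positivity
  have hτl : τ ^ l = (1 + θ) / 2 := by
    rw [hτdef, ← Real.rpow_mul hbase0.le, one_div_mul_cancel hl.ne', Real.rpow_one]
  have hτnl : τ ^ (-l) = 2 / (1 + θ) := by
    rw [Real.rpow_neg hτpos.le, hτl]
    field_simp
  set q : ℝ := θ * τ ^ (-l) with hqdef
  have hq0 : 0 ≤ q := by
    apply mul_nonneg hθ0 (Real.rpow_nonneg hτpos.le _)
  have hq1 : q < 1 := by
    rw [hqdef, hτnl, mul_div_assoc', div_lt_one (by linarith : (0:ℝ) < 1 + θ)]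
    linarith
  set C₁ : ℝ := (1 - τ) ^ (-l) / (1 - q) with hC₁def
  set C₂ : ℝ := 1 / (1 - θ) with hC₂def
  have hC₁0 : 0 < C₁ :=
    div_pos (Real.rpow_pos_of_pos (by linarith) _) (by linarith)
  have hC₂0 : 0 < C₂ := div_pos one_pos (by linarith)
  refine ⟨max C₁ C₂ + 1, by linarith [le_max_left C₁ C₂], ?_⟩
  intro f A B T₀ T₁ hA hB hT hf0 ⟨M, hM⟩ hiter ρ R hρ hρR hR
  -- the sequence of radii
  set t : ℕ → ℝ := fun n => R - (R - ρ) * τ ^ n with htdef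
  have hRρ : 0 < R - ρ := by linarith
  have ht0 : t 0 = ρ := by simp [htdef]
  have htmem : ∀ n, t n ∈ Icc T₀ T₁ := by
    intro n
    have h1 : τ ^ n ≤ 1 := pow_le_one₀ hτpos.le hτ1.le
    have h2 : 0 < τ ^ n := pow_pos hτpos n
    constructor
    · simp only [htdef]
      nlinarith
    · simp only [htdef]
      nlinarith
  have hM0 : 0 ≤ M := le_trans (hf0 _ (htmem 0)) (hM _ (htmem 0))
  -- one step of the iteration
  have hstep : ∀ n : ℕ, f (t n) ≤
      A * (R - ρ) ^ (-l) * (1 - τ) ^ (-l) * (τ ^ (-l)) ^ n + B + θ * f (t (n+1)) := by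
    intro n
    have hdiff : t (n+1) - t n = (R - ρ) * (1 - τ) * τ ^ n := by
      simp only [htdef]; ring
    have hlt : t n < t (n+1) := by
      rw [← sub_pos, hdiff]
      exact mul_pos (mul_pos hRρ (by linarith)) (pow_pos hτpos n)
    have h := hiter (t n) (t (n+1)) (htmem n).1 hlt (htmem (n+1)).2
    rw [hdiff] at h
    have hrw : ((R - ρ) * (1 - τ) * τ ^ n) ^ (-l)
        = (R - ρ) ^ (-l) * (1 - τ) ^ (-l) * (τ ^ (-l)) ^ n := by
      rw [Real.mul_rpow (mul_nonneg hRρ.le (by linarith)) (pow_pos hτpos n).le,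
          Real.mul_rpow hRρ.le (by linarith : (0:ℝ) ≤ 1 - τ),
          ← Real.rpow_natCast τ n, ← Real.rpow_natCast (τ ^ (-l)) n,
          ← Real.rpow_mul hτpos.le, ← Real.rpow_mul hτpos.le]
      ring_nf
    rw [hrw] at h
    linarith [h]
  -- induction: telescoped estimate
  have hmain : ∀ n : ℕ, f ρ ≤
      A * (R - ρ) ^ (-l) * (1 - τ) ^ (-l) * (∑ i ∈ Finset.range n, q ^ i)
        + B * (∑ i ∈ Finset.range n, θ ^ i) + θ ^ n * f (t n) := by
    intro n
    induction n with
    | zero => simp [ht0]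
    | succ n ih =>
      have hs := hstep n
      have hθn : (0:ℝ) ≤ θ ^ n := pow_nonneg hθ0 n
      have hmul := mul_le_mul_of_nonneg_left hs hθn
      have hqn : θ ^ n * (τ ^ (-l)) ^ n = q ^ n := by
        rw [hqdef, mul_pow]
      calc f ρ ≤ _ := ih
        _ ≤ A * (R - ρ) ^ (-l) * (1 - τ) ^ (-l) * (∑ i ∈ Finset.range n, q ^ i)
              + B * (∑ i ∈ Finset.range n, θ ^ i)
              + θ ^ n * (A * (R - ρ) ^ (-l) * (1 - τ) ^ (-l) * (τ ^ (-l)) ^ n + B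
                  + θ * f (t (n+1))) := by linarith
        _ = A * (R - ρ) ^ (-l) * (1 - τ) ^ (-l)
              * (∑ i ∈ Finset.range n, q ^ i + θ ^ n * (τ ^ (-l)) ^ n)
              + B * (∑ i ∈ Finset.range n, θ ^ i + θ ^ n)
              + θ ^ (n+1) * f (t (n+1)) := by ring
        _ = _ := by
            rw [hqn, Finset.sum_range_succ, Finset.sum_range_succ]
  -- bound via geometric series and pass to the limit
  have hpos : (0:ℝ) ≤ A * (R - ρ) ^ (-l) :=
    mul_nonneg hA (Real.rpow_nonneg hRρ.le _)
  have hbound : ∀ n : ℕ, f ρ ≤ A * (R - ρ) ^ (-l) * C₁ + B * C₂ + θ ^ n * M := by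
    intro n
    have h1 : (∑ i ∈ Finset.range n, q ^ i) ≤ (1 - q)⁻¹ := geom_sum_le_aux hq0 hq1 n
    have h2 : (∑ i ∈ Finset.range n, θ ^ i) ≤ (1 - θ)⁻¹ := geom_sum_le_aux hθ0 hθ1 n
    have h3 : θ ^ n * f (t n) ≤ θ ^ n * M :=
      mul_le_mul_of_nonneg_left (hM _ (htmem n)) (pow_nonneg hθ0 n)
    have h4 : (0:ℝ) ≤ A * (R - ρ) ^ (-l) * (1 - τ) ^ (-l) :=
      mul_nonneg hpos (Real.rpow_nonneg (by linarith) _)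
    have h5 := hmain n
    have hC₁eq : A * (R - ρ) ^ (-l) * C₁
        = A * (R - ρ) ^ (-l) * (1 - τ) ^ (-l) * (1 - q)⁻¹ := by
      rw [hC₁def]; ring
    have hC₂eq : B * C₂ = B * (1 - θ)⁻¹ := by rw [hC₂def]; ring
    rw [hC₁eq, hC₂eq]
    linarith [mul_le_mul_of_nonneg_left h1 h4, mul_le_mul_of_nonneg_left h2 hB]
  have hlim : Filter.Tendsto (fun n : ℕ => A * (R - ρ) ^ (-l) * C₁ + B * C₂ + θ ^ n * M)
      Filter.atTop (nhds (A * (R - ρ) ^ (-l) * C₁ + B * C₂ + 0 * M)) := by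
    apply Filter.Tendsto.add tendsto_const_nhds
    exact (tendsto_pow_atTop_nhds_zero_of_lt_one hθ0 hθ1).mul_const M
  have hfin : f ρ ≤ A * (R - ρ) ^ (-l) * C₁ + B * C₂ := by
    have := ge_of_tendsto' hlim hbound
    linarith [this]
  have hγ1 : C₁ ≤ max C₁ C₂ + 1 := le_trans (le_max_left _ _) (by linarith)
  have hγ2 : C₂ ≤ max C₁ C₂ + 1 := le_trans (le_max_right _ _) (by linarith)
  calc f ρ ≤ A * (R - ρ) ^ (-l) * C₁ + B * C₂ := hfin
    _ ≤ A * (R - ρ) ^ (-l) * (max C₁ C₂ + 1) + B * (max C₁ C₂ + 1) := by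
        gcongr
    _ = (max C₁ C₂ + 1) * (A * (R - ρ) ^ (-l) + B) := by ring
end

section
/- Let v ≥ 0 be in C^{1,1}(B) ∩ H²₀(B) on a ball B ⊂ ℝⁿ, let p ≥ 4 and B_R(x₀) ⊂ B. Then √v ∈ H^{1,p}(B_R(x₀)) and ∫_{B_R(x₀)} |∇√v|^p dx ≤ C ‖v‖_{C^{1,1}(B)}^{p/2}, where C is independent of v. -/
/-!
If `v ≥ 0` has a `K`-Lipschitz derivative, then
`0 ≤ v (x + t h) ≤ v x + t v'(x) h + K t² ‖h‖²` for every real `t`, so the discriminant of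
this quadratic in `t` is nonpositive: `‖v'(x)‖² ≤ 4 K v(x)`. Where `v > 0` this gives
`‖∇√v‖ = ‖v'‖ / (2√v) ≤ √K`; where `v = 0` the same Taylor bound gives
`√v(y) ≤ √K ‖y - x‖`, so again `‖∇√v‖ ≤ √K`. A bounded gradient lies in every `L^p` of a
ball, with `∫_B ‖∇√v‖^p ≤ |B| K^{p/2}`.
-/

open MeasureTheory Metric Set

section LipschitzFDeriv

variable {E : Type*} [NormedAddCommGroup E] [NormedSpace ℝ E]
  {v : E → ℝ} {K : ℝ}

theorem le_add_fderiv_add_mul_sq_norm (hK : 0 ≤ K) (hv : Differentiable ℝ v)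
    (hlip : ∀ x y, ‖fderiv ℝ v x - fderiv ℝ v y‖ ≤ K * dist x y) (x h : E) :
    v (x + h) ≤ v x + fderiv ℝ v x h + K * ‖h‖ ^ 2 := by
  have hbound : ∀ z ∈ closedBall x ‖h‖, ‖fderiv ℝ v z - fderiv ℝ v x‖ ≤ K * ‖h‖ :=
    fun z hz => (hlip z x).trans (mul_le_mul_of_nonneg_left (mem_closedBall.1 hz) hK)
  have hmv := (convex_closedBall x ‖h‖).norm_image_sub_le_of_norm_fderiv_le'
    (fun z _ => hv z) hbound (mem_closedBall_self (norm_nonneg h)) (y := x + h)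
    (by simp [mem_closedBall, dist_eq_norm])
  rw [add_sub_cancel_left, Real.norm_eq_abs] at hmv
  nlinarith [le_abs_self (v (x + h) - v x - fderiv ℝ v x h)]

theorem sq_norm_fderiv_le_of_nonneg (hK : 0 ≤ K) (hv0 : ∀ x, 0 ≤ v x)
    (hv : Differentiable ℝ v)
    (hlip : ∀ x y, ‖fderiv ℝ v x - fderiv ℝ v y‖ ≤ K * dist x y) (x : E) :
    ‖fderiv ℝ v x‖ ^ 2 ≤ 4 * K * v x := by
  have hdir : ∀ h : E, |fderiv ℝ v x h| ≤ √(4 * K * v x) * ‖h‖ := by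
    intro h
    have hquad : ∀ t : ℝ, 0 ≤ (K * ‖h‖ ^ 2) * (t * t) + fderiv ℝ v x h * t + v x := by
      intro t
      have := le_add_fderiv_add_mul_sq_norm hK hv hlip x (t • h)
      rw [map_smul, smul_eq_mul, norm_smul, Real.norm_eq_abs, mul_pow, sq_abs] at this
      nlinarith [hv0 (x + t • h)]
    have hdisc := discrim_le_zero hquad
    rw [discrim] at hdisc
    rw [← Real.sqrt_sq (norm_nonneg h), ← Real.sqrt_mul (by have := hv0 x; positivity),
      ← Real.sqrt_sq_eq_abs]
    exact Real.sqrt_le_sqrt (by linarith)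
  have hnorm : ‖fderiv ℝ v x‖ ≤ √(4 * K * v x) :=
    ContinuousLinearMap.opNorm_le_bound _ (Real.sqrt_nonneg _) hdir
  calc ‖fderiv ℝ v x‖ ^ 2 ≤ √(4 * K * v x) ^ 2 := pow_le_pow_left₀ (norm_nonneg _) hnorm 2
    _ = 4 * K * v x := Real.sq_sqrt (by have := hv0 x; positivity)

theorem norm_fderiv_sqrt_le_of_nonneg (hK : 0 ≤ K) (hv0 : ∀ x, 0 ≤ v x)
    (hv : Differentiable ℝ v)
    (hlip : ∀ x y, ‖fderiv ℝ v x - fderiv ℝ v y‖ ≤ K * dist x y) (x : E) :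
    ‖fderiv ℝ (fun y => √(v y)) x‖ ≤ √K := by
  rcases (hv0 x).eq_or_lt with hx | hx
  · have hmin : IsLocalMin v x := Filter.Eventually.of_forall fun y => hx ▸ hv0 y
    refine norm_fderiv_le_of_lip' ℝ (Real.sqrt_nonneg K)
      (Filter.Eventually.of_forall fun y => ?_)
    have htaylor := le_add_fderiv_add_mul_sq_norm hK hv hlip x (y - x)
    rw [hmin.fderiv_eq_zero, add_sub_cancel, ← hx] at htaylor
    rw [← hx, Real.sqrt_zero, sub_zero, Real.norm_of_nonneg (Real.sqrt_nonneg _),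
      ← Real.sqrt_sq (norm_nonneg (y - x)), ← Real.sqrt_mul hK]
    exact Real.sqrt_le_sqrt (by simpa using htaylor)
  · rw [fderiv_sqrt (hv x) hx.ne', norm_smul, Real.norm_of_nonneg (by positivity),
      one_div_mul_eq_div, div_le_iff₀ (by positivity)]
    calc ‖fderiv ℝ v x‖ ≤ √(4 * K * v x) :=
          Real.le_sqrt_of_sq_le (sq_norm_fderiv_le_of_nonneg hK hv0 hv hlip x)
      _ = √K * (2 * √(v x)) := by
          rw [Real.sqrt_mul' _ hx.le, Real.sqrt_mul' _ hK, show (4 : ℝ) = 2 ^ 2 by norm_num,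
            Real.sqrt_sq zero_le_two]
          ring

end LipschitzFDeriv

theorem sqrt_embedding_general
    (n : ℕ) (x₀B : EuclideanSpace ℝ (Fin n)) (RB : ℝ)
    (p : ℝ) (hp : 4 ≤ p)
    (x₀ : EuclideanSpace ℝ (Fin n)) (R : ℝ) :
    ∃ C : ℝ, 0 < C ∧
      ∀ (v : EuclideanSpace ℝ (Fin n) → ℝ) (K : ℝ), 0 ≤ K →
        (∀ x, 0 ≤ v x) → ContDiff ℝ 1 v → HasCompactSupport v →
        tsupport v ⊆ Metric.ball x₀B RB →
        (∀ x, |v x| ≤ K) → (∀ x, ‖fderiv ℝ v x‖ ≤ K) →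
        (∀ x y, ‖fderiv ℝ v x - fderiv ℝ v y‖ ≤ K * dist x y) →
        (MemLp (fun x => fderiv ℝ (fun y => Real.sqrt (v y)) x)
          (ENNReal.ofReal p) (volume.restrict (Metric.ball x₀ R)) ∧
        ∫ x in Metric.ball x₀ R, ‖fderiv ℝ (fun y => Real.sqrt (v y)) x‖ ^ p
          ≤ C * K ^ (p / 2)) := by
  refine ⟨volume.real (ball x₀ R) + 1, by positivity, ?_⟩
  intro v K hK hv0 hv _ _ _ _ hlip
  have hbound := norm_fderiv_sqrt_le_of_nonneg hK hv0 (hv.differentiable one_ne_zero) hlip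
  have hpow : ∀ x, ‖‖fderiv ℝ (fun y => √(v y)) x‖ ^ p‖ ≤ K ^ (p / 2) := fun x => by
    rw [Real.norm_of_nonneg (by positivity), Real.rpow_div_two_eq_sqrt _ hK]
    exact Real.rpow_le_rpow (norm_nonneg _) (hbound x) (by linarith)
  have : IsFiniteMeasure (volume.restrict (ball x₀ R)) :=
    isFiniteMeasure_restrict.2 measure_ball_lt_top.ne
  refine ⟨(memLp_top_of_bound (measurable_fderiv ℝ _).aestronglyMeasurable _
    (Filter.Eventually.of_forall hbound)).mono_exponent le_top, ?_⟩
  calc ∫ x in ball x₀ R, ‖fderiv ℝ (fun y => √(v y)) x‖ ^ p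
      ≤ K ^ (p / 2) * volume.real (ball x₀ R) :=
        (le_abs_self _).trans (norm_setIntegral_le_of_norm_le_const measure_ball_lt_top
          fun x _ => hpow x)
    _ ≤ (volume.real (ball x₀ R) + 1) * K ^ (p / 2) := by
        nlinarith [Real.rpow_nonneg hK (p / 2)]

/-- Embedding theorem for `√v` (Theorem 4.5 of the paper): let `v ≥ 0` be in
`C^{1,1}(B) ∩ H²₀(B)` on a ball `B`, let `p ≥ 4` and `B_R(x₀) ⊆ B`. Then
`√v ∈ H^{1,p}(B_R(x₀))` with `∫_{B_R(x₀)} |∇√v|^p ≤ C ‖v‖_{C^{1,1}(B)}^{p/2}`, where the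
constant `C` is independent of `v`; the `C^{1,1}` norm is encoded by a bound `K` on `|v|`,
`|∇v|` and the Lipschitz constant of `∇v`, and the (a.e. defined) gradient of `√v` by
`fderiv` (with junk value `0` at points of nondifferentiability). -/
theorem sqrt_embedding
    (n : ℕ) (x₀B : EuclideanSpace ℝ (Fin n)) (RB : ℝ) (hRB : 0 < RB)
    (p : ℝ) (hp : 4 ≤ p)
    (x₀ : EuclideanSpace ℝ (Fin n)) (R : ℝ) (hR : 0 < R)
    (hRin : Metric.ball x₀ R ⊆ Metric.ball x₀B RB) :
    ∃ C : ℝ, 0 < C ∧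
      ∀ (v : EuclideanSpace ℝ (Fin n) → ℝ) (K : ℝ), 0 ≤ K →
        (∀ x, 0 ≤ v x) → ContDiff ℝ 1 v → HasCompactSupport v →
        tsupport v ⊆ Metric.ball x₀B RB →
        (∀ x, |v x| ≤ K) → (∀ x, ‖fderiv ℝ v x‖ ≤ K) →
        (∀ x y, ‖fderiv ℝ v x - fderiv ℝ v y‖ ≤ K * dist x y) →
        (MemLp (fun x => fderiv ℝ (fun y => Real.sqrt (v y)) x)
          (ENNReal.ofReal p) (volume.restrict (Metric.ball x₀ R)) ∧
        ∫ x in Metric.ball x₀ R, ‖fderiv ℝ (fun y => Real.sqrt (v y)) x‖ ^ p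
          ≤ C * K ^ (p / 2)) :=
  sqrt_embedding_general n x₀B RB p hp x₀ R
end

section
/- Let δ ∈ (0, 1/2) and u > 0. Define h_δ : ℝ → ℝ by h_δ(s) = 0 for s ≤ 0, h_δ(s) = −(δ/(1−δ)) s²/u + s^{1+δ}/(u^δ (1−δ)) for 0 < s < u, and h_δ(s) = s for s ≥ u. Then h_δ is C¹ on ℝ, h_δ(0) = 0, h_δ(u) = u, and for 0 < s < u one has s² (h_δ''(s))² ≤ 50 δ². -/
open Set Real Filter Topology

/-! The middle piece `g(s) = -(δ/(1-δ)) s²/u + s^(1+δ)/(u^δ (1-δ))` has `g(0) = g'(0) = 0` and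
`g(u) = g'(u) = 1`, so it glues `C¹` to `0` on the left and to the identity on the right.
On `(0, u)`, with `t = s/u`, one has `s g''(s) = δ/(1-δ) ((1+δ) t^δ - 2t)`; the bracket lies in
`[-2, 2]` and `δ/(1-δ) ≤ 2δ` for `δ ≤ 1/2`, whence `s² g''(s)² ≤ 16 δ²`. -/

theorem HasDerivAt.of_eventuallyEq_nhdsLE_nhdsGE {F f g : ℝ → ℝ} {x d : ℝ}
    (hf : HasDerivAt f d x) (hg : HasDerivAt g d x)
    (hFf : F =ᶠ[𝓝[≤] x] f) (hFg : F =ᶠ[𝓝[≥] x] g) : HasDerivAt F d x := by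
  have hglued := (hf.hasDerivWithinAt.congr_of_eventuallyEq hFf
    (hFf.eq_of_nhdsWithin self_mem_Iic)).union
    (hg.hasDerivWithinAt.congr_of_eventuallyEq hFg (hFg.eq_of_nhdsWithin self_mem_Ici))
  rwa [Iic_union_Ici, hasDerivWithinAt_univ] at hglued

section Piecewise3

variable {a b : ℝ} {f g k : ℝ → ℝ}

noncomputable def piecewise3 (a b : ℝ) (f g k : ℝ → ℝ) (s : ℝ) : ℝ :=
  if s ≤ a then f s else if s < b then g s else k s

theorem piecewise3_eqOn_Iic : EqOn (piecewise3 a b f g k) f (Iic a) :=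
  fun _ hs => if_pos hs

theorem piecewise3_eqOn_Icc (ha : f a = g a) (hb : g b = k b) :
    EqOn (piecewise3 a b f g k) g (Icc a b) := by
  intro s ⟨has, hsb⟩
  rcases has.eq_or_lt with rfl | has
  · simp [piecewise3, ha]
  rcases hsb.eq_or_lt with rfl | hsb
  · simp [piecewise3, not_le.mpr has, hb]
  · simp [piecewise3, not_le.mpr has, hsb]

theorem piecewise3_eqOn_Ici (hab : a < b) : EqOn (piecewise3 a b f g k) k (Ici b) :=
  fun _ (hs : b ≤ _) => by simp [piecewise3, not_le.mpr (hab.trans_le hs), not_lt.mpr hs]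

theorem piecewise3_eventuallyEq_of_mem_Ioo {x : ℝ} (hx : x ∈ Ioo a b) :
    piecewise3 a b f g k =ᶠ[𝓝 x] g :=
  eventually_of_mem (Ioo_mem_nhds hx.1 hx.2) fun _ hs => by
    simp [piecewise3, not_le.mpr hs.1, hs.2]

theorem continuous_piecewise3 (hab : a < b) (hf : Continuous f) (hg : Continuous g)
    (hk : Continuous k) (ha : f a = g a) (hb : g b = k b) :
    Continuous (piecewise3 a b f g k) := by
  rw [← continuousOn_univ, ← Iic_union_Ici (a := b), ← Iic_union_Icc_eq_Iic hab.le]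
  exact ((hf.continuousOn.congr piecewise3_eqOn_Iic).union_of_isClosed
    (hg.continuousOn.congr (piecewise3_eqOn_Icc ha hb)) isClosed_Iic isClosed_Icc
    ).union_of_isClosed (hk.continuousOn.congr (piecewise3_eqOn_Ici hab))
    (isClosed_Iic.union isClosed_Icc) isClosed_Ici

theorem hasDerivAt_piecewise3 (hab : a < b) {f' g' k' : ℝ → ℝ}
    (hf : ∀ x, HasDerivAt f (f' x) x) (hg : ∀ x, HasDerivAt g (g' x) x)
    (hk : ∀ x, HasDerivAt k (k' x) x) (ha : f a = g a) (hb : g b = k b)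
    (ha' : f' a = g' a) (hb' : g' b = k' b) (x : ℝ) :
    HasDerivAt (piecewise3 a b f g k) (piecewise3 a b f' g' k' x) x := by
  have hIic : EqOn (piecewise3 a b f g k) f (Iic a) := piecewise3_eqOn_Iic
  have hIcc : EqOn (piecewise3 a b f g k) g (Icc a b) := piecewise3_eqOn_Icc ha hb
  have hIci : EqOn (piecewise3 a b f g k) k (Ici b) := piecewise3_eqOn_Ici hab
  rcases lt_trichotomy x a with hxa | rfl | hax
  · rw [piecewise3_eqOn_Iic hxa.le]
    exact (hf x).congr_of_eventuallyEq (hIic.eventuallyEq_of_mem (Iic_mem_nhds hxa))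
  · rw [piecewise3_eqOn_Iic self_mem_Iic]
    exact (hf x).of_eventuallyEq_nhdsLE_nhdsGE (ha' ▸ hg x)
      (hIic.eventuallyEq_of_mem self_mem_nhdsWithin)
      (hIcc.eventuallyEq_of_mem (Icc_mem_nhdsGE hab))
  rcases lt_trichotomy x b with hxb | rfl | hbx
  · rw [piecewise3_eventuallyEq_of_mem_Ioo ⟨hax, hxb⟩ |>.eq_of_nhds]
    exact (hg x).congr_of_eventuallyEq (piecewise3_eventuallyEq_of_mem_Ioo ⟨hax, hxb⟩)
  · rw [piecewise3_eqOn_Ici hab self_mem_Ici]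
    exact (hb' ▸ hg x).of_eventuallyEq_nhdsLE_nhdsGE (hk x)
      (hIcc.eventuallyEq_of_mem (Icc_mem_nhdsLE hab))
      (hIci.eventuallyEq_of_mem self_mem_nhdsWithin)
  · rw [piecewise3_eqOn_Ici hab hbx.le]
    exact (hk x).congr_of_eventuallyEq (hIci.eventuallyEq_of_mem (Ici_mem_nhds hbx))

end Piecewise3

section RegularizedPositivePart

variable {δ u : ℝ}

noncomputable def hdeltaMid (δ u s : ℝ) : ℝ :=
  -(δ / (1 - δ)) * s ^ 2 / u + s ^ (1 + δ) / (u ^ δ * (1 - δ))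

noncomputable def hdeltaMidDeriv (δ u s : ℝ) : ℝ :=
  -(δ / (1 - δ)) * (2 * s) / u + (1 + δ) * s ^ δ / (u ^ δ * (1 - δ))

theorem hasDerivAt_hdeltaMid (hδ : 0 ≤ δ) (s : ℝ) :
    HasDerivAt (hdeltaMid δ u) (hdeltaMidDeriv δ u s) s := by
  have hpow := ((hasDerivAt_pow 2 s).const_mul (-(δ / (1 - δ)))).div_const u
  have hrpow := (hasDerivAt_rpow_const (x := s) (p := 1 + δ) (.inr (by linarith))).div_const
    (u ^ δ * (1 - δ))
  rw [add_sub_cancel_left] at hrpow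
  exact (hpow.add hrpow).congr_deriv (by simp only [hdeltaMidDeriv]; ring)

theorem hdeltaMid_zero (hδ : 0 ≤ δ) : hdeltaMid δ u 0 = 0 := by
  simp [hdeltaMid, zero_rpow (by linarith : 1 + δ ≠ 0)]

theorem hdeltaMid_self (hu : 0 < u) (hδ : δ ≠ 1) : hdeltaMid δ u u = u := by
  have h1δ : 1 - δ ≠ 0 := sub_ne_zero.mpr hδ.symm
  have huδ : u ^ δ ≠ 0 := (rpow_pos_of_pos hu δ).ne'
  rw [hdeltaMid, rpow_add hu, rpow_one]
  field_simp
  ring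

theorem hdeltaMidDeriv_zero (hδ : δ ≠ 0) : hdeltaMidDeriv δ u 0 = 0 := by
  simp [hdeltaMidDeriv, zero_rpow hδ]

theorem hdeltaMidDeriv_self (hu : 0 < u) (hδ : δ ≠ 1) : hdeltaMidDeriv δ u u = 1 := by
  have h1δ : 1 - δ ≠ 0 := sub_ne_zero.mpr hδ.symm
  have huδ : u ^ δ ≠ 0 := (rpow_pos_of_pos hu δ).ne'
  rw [hdeltaMidDeriv]
  field_simp
  ring

theorem continuous_hdeltaMidDeriv (hδ : 0 ≤ δ) : Continuous (hdeltaMidDeriv δ u) := by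
  unfold hdeltaMidDeriv
  fun_prop (disch := exact hδ)

theorem hasDerivAt_hdeltaMidDeriv {s : ℝ} (hs : s ≠ 0) :
    HasDerivAt (hdeltaMidDeriv δ u)
      (δ / (1 - δ) * ((1 + δ) * s ^ (δ - 1) / u ^ δ - 2 / u)) s := by
  have hlin := ((hasDerivAt_id s).const_mul 2 |>.const_mul (-(δ / (1 - δ)))).div_const u
  have hrpow := ((hasDerivAt_rpow_const (p := δ) (.inl hs)).const_mul (1 + δ)).div_const
    (u ^ δ * (1 - δ))
  exact (hlin.add hrpow).congr_deriv (by simp only [div_eq_mul_inv, mul_inv]; ring)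

theorem sq_div_one_sub_mul_le_sixteen_mul_sq {r t : ℝ} (hδ0 : 0 ≤ δ) (hδ : δ ≤ 1 / 2)
    (hr : r ∈ Icc 0 1) (ht : t ∈ Icc 0 1) :
    (δ / (1 - δ) * ((1 + δ) * r - 2 * t)) ^ 2 ≤ 16 * δ ^ 2 := by
  have hX : |(1 + δ) * r - 2 * t| ≤ 2 :=
    abs_le.mpr ⟨by nlinarith [hr.1, ht.2], by nlinarith [hr.2, ht.1]⟩
  have hc : δ / (1 - δ) ≤ 2 * δ := by
    rw [div_le_iff₀ (by linarith)]
    nlinarith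
  calc (δ / (1 - δ) * ((1 + δ) * r - 2 * t)) ^ 2
      = (δ / (1 - δ) * |(1 + δ) * r - 2 * t|) ^ 2 := by rw [mul_pow, mul_pow, sq_abs]
    _ ≤ (2 * δ * 2) ^ 2 := by
        have : 0 ≤ δ / (1 - δ) := div_nonneg hδ0 (by linarith)
        gcongr
    _ = 16 * δ ^ 2 := by ring

theorem sq_mul_deriv_hdeltaMidDeriv_sq_le (hδ0 : 0 ≤ δ) (hδ : δ ≤ 1 / 2) {s : ℝ}
    (hs : s ∈ Ioc 0 u) : s ^ 2 * deriv (hdeltaMidDeriv δ u) s ^ 2 ≤ 16 * δ ^ 2 := by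
  obtain ⟨hs0, hsu⟩ := hs
  have hu : 0 < u := hs0.trans_le hsu
  have hscale : s * (δ / (1 - δ) * ((1 + δ) * s ^ (δ - 1) / u ^ δ - 2 / u))
      = δ / (1 - δ) * ((1 + δ) * (s / u) ^ δ - 2 * (s / u)) := by
    rw [rpow_sub_one hs0.ne', div_rpow hs0.le hu.le]
    field_simp
  rw [(hasDerivAt_hdeltaMidDeriv hs0.ne').deriv, ← mul_pow, hscale]
  have ht1 : s / u ≤ 1 := (div_le_one hu).mpr hsu
  exact sq_div_one_sub_mul_le_sixteen_mul_sq hδ0 hδ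
    ⟨by positivity, rpow_le_one (by positivity) ht1 hδ0⟩ ⟨by positivity, ht1⟩

end RegularizedPositivePart

/-- Properties of the regularization `h_δ` of the positive part (Theorem 4.6): for
`δ ∈ (0, 1/2)` and `u > 0`, the function `h_δ` defined piecewise by `0` for `s ≤ 0`,
`−(δ/(1−δ)) s²/u + s^{1+δ}/(u^δ (1−δ))` for `0 < s < u`, and `s` for `s ≥ u`, is `C¹`
on `ℝ`, satisfies `h_δ(0) = 0` and `h_δ(u) = u`, and obeys `s² (h_δ''(s))² ≤ 50 δ²` for
`0 < s < u`. -/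
theorem hdelta_properties (δ u : ℝ) (hδ0 : 0 < δ) (hδ : δ < 1 / 2) (hu : 0 < u) :
    let h : ℝ → ℝ := fun s =>
      if s ≤ 0 then 0
      else if s < u then -(δ / (1 - δ)) * s ^ 2 / u + s ^ (1 + δ) / (u ^ δ * (1 - δ))
      else s
    ContDiff ℝ 1 h ∧ h 0 = 0 ∧ h u = u ∧
      ∀ s ∈ Ioo (0 : ℝ) u, s ^ 2 * (deriv (deriv h) s) ^ 2 ≤ 50 * δ ^ 2 := by
  intro h
  have hδ1 : δ ≠ 1 := by linarith
  have hh : h = piecewise3 0 u (fun _ => 0) (hdeltaMid δ u) id := rfl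
  set h' := piecewise3 0 u (fun _ => 0) (hdeltaMidDeriv δ u) (fun _ => 1)
  have hderiv : ∀ s, HasDerivAt h (h' s) s :=
    hh ▸ hasDerivAt_piecewise3 hu (fun _ => hasDerivAt_const _ _) (hasDerivAt_hdeltaMid hδ0.le)
      hasDerivAt_id (hdeltaMid_zero hδ0.le).symm (hdeltaMid_self hu hδ1)
      (hdeltaMidDeriv_zero hδ0.ne').symm (hdeltaMidDeriv_self hu hδ1)
  have hderiv_eq : deriv h = h' := funext fun s => (hderiv s).deriv
  have hcont : Continuous h' := continuous_piecewise3 hu continuous_const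
    (continuous_hdeltaMidDeriv hδ0.le) continuous_const (hdeltaMidDeriv_zero hδ0.ne').symm
    (hdeltaMidDeriv_self hu hδ1)
  have hC1 : ContDiff ℝ 1 h :=
    contDiff_one_iff_deriv.mpr ⟨fun s => (hderiv s).differentiableAt, hderiv_eq ▸ hcont⟩
  refine ⟨hC1, if_pos le_rfl, hh ▸ piecewise3_eqOn_Ici hu self_mem_Ici, fun s hs => ?_⟩
  rw [hderiv_eq, (piecewise3_eventuallyEq_of_mem_Ioo hs).deriv_eq]
  have hbound := sq_mul_deriv_hdeltaMidDeriv_sq_le hδ0.le hδ.le (Ioo_subset_Ioc_self hs)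
  linarith [sq_nonneg δ]
end
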